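/- For every integer n ≥ 1, the set of sizes of the orbits of the set of Lucas strings of length n under the dihedral action generated by the cyclic shift α and the reversal β equals {k ≥ 1 : k divides n} ∪ {k ≥ 18 : k divides 2n}. -/

import Mathlib

/-!
A string of length `n` whose least rotation period is `p` (so `p ∣ n`) is the `n`-letter tiling
of a word `g : ZMod p → Bool` fixed by no nontrivial translation. Its dihedral orbit consists of
its `p` rotations, together with `p` more exactly when `g` is chiral, i.e. fixed by no reflection
`x ↦ c - x`; so orbit sizes are `p` or `2p`. The Lucas condition on the string says exactly that
`g` has no two cyclically adjacent ones. An enumeration shows that all such words with `p < 9` are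
achiral, so chiral orbits have size at least `18`. Conversely, for `p ∣ n` the words `0`, `10⋯0`
(`p ≥ 2`) and `1010010⋯0` (`p ≥ 9`) give orbits of sizes `1`, `p` and `2p`.
-/

open scoped Classical

/-- Cyclic shift `α`: maps `u₁u₂⋯uₙ` to `uₙu₁⋯uₙ₋₁`. -/
def cyc {α : Type*} (u : List α) : List α := u.rotate (u.length - 1)

/-- `listPow v k` is the concatenation of `k` copies of `v`. -/
def listPow {α : Type*} (v : List α) (k : ℕ) : List α := (List.replicate k v).flatten

/-- The period of `u`: the least `k > 0` with `cyc^[k] u = u`. -/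
noncomputable def period {α : Type*} (u : List α) : ℕ := sInf {k | 0 < k ∧ cyc^[k] u = u}

/-- `u` is primitive if it is not the concatenation of `k ≥ 2` copies of a shorter string. -/
def IsPrimitive {α : Type*} (u : List α) : Prop :=
  ∀ (v : List α) (k : ℕ), 2 ≤ k → v.length < u.length → u ≠ listPow v k

/-- The dihedral orbit of `u`: `{α^j(u) : 0 ≤ j < n} ∪ {α^j(β(u)) : 0 ≤ j < n}`,
where `β` is reversal. -/
noncomputable def dihedralOrbit {α : Type*} [DecidableEq α] (u : List α) : Finset (List α) :=
  ((Finset.range u.length).image fun j => cyc^[j] u) ∪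
    ((Finset.range u.length).image fun j => cyc^[j] u.reverse)

/-- Lucas numbers: `L₀ = 2`, `L₁ = 1`, `Lₙ = Lₙ₋₁ + Lₙ₋₂`. -/
def lucas : ℕ → ℕ
  | 0 => 2
  | 1 => 1
  | n + 2 => lucas (n + 1) + lucas n

/-- All binary strings of length `n`, as a finset of boolean lists. -/
def allBool (n : ℕ) : Finset (List Bool) :=
  (Finset.univ : Finset (Fin n → Bool)).image fun f => List.ofFn f

/-- A Fibonacci string: a binary string with no two consecutive 1s. -/
def IsFibStr (l : List Bool) : Prop := l.Chain' fun a b => a = false ∨ b = false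

/-- The Fibonacci strings of length `n` (vertices of the Fibonacci cube `Γₙ`). -/
noncomputable def fibStrings (n : ℕ) : Finset (List Bool) := (allBool n).filter IsFibStr

/-- A Lucas string: a binary string with no two consecutive 1s which does not both
begin and end with 1. -/
def IsLucasStr (l : List Bool) : Prop :=
  IsFibStr l ∧ ¬(l.head? = some true ∧ l.getLast? = some true)

/-- The Lucas strings of length `n` (vertices of the Lucas cube `Λₙ`). -/
noncomputable def lucasStrings (n : ℕ) : Finset (List Bool) := (allBool n).filter IsLucasStr

/-- Two strings differ in exactly one position. -/
def DifferOne (u v : List Bool) : Prop :=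
  u.length = v.length ∧ (List.zipWith (fun a b => a != b) u v).count true = 1

/-- The edges of the Fibonacci cube `Γₙ`, as unordered pairs of vertices. -/
noncomputable def fibEdges (n : ℕ) : Finset (Finset (List Bool)) :=
  ((fibStrings n ×ˢ fibStrings n).filter fun p => DifferOne p.1 p.2).image fun p => {p.1, p.2}

/-- The edges of the Lucas cube `Λₙ`, as unordered pairs of vertices. -/
noncomputable def lucasEdges (n : ℕ) : Finset (Finset (List Bool)) :=
  ((lucasStrings n ×ˢ lucasStrings n).filter fun p => DifferOne p.1 p.2).image fun p => {p.1, p.2}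

/-- The orbit of a vertex under the reversal map `β`. -/
def revOrbit (u : List Bool) : Finset (List Bool) := {u, u.reverse}

/-- The orbit of an edge under the reversal map `β`, acting by `β({u,v}) = {β(u),β(v)}`. -/
def revEdgeOrbit (e : Finset (List Bool)) : Finset (Finset (List Bool)) :=
  {e, e.image List.reverse}

/-- The orbit of an edge under the dihedral action on strings of length `n`:
`{α^j(e) : 0 ≤ j < n} ∪ {α^j(β(e)) : 0 ≤ j < n}`. -/
noncomputable def dihedralEdgeOrbit (n : ℕ) (e : Finset (List Bool)) :
    Finset (Finset (List Bool)) :=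
  ((Finset.range n).image fun j => e.image fun u => cyc^[j] u) ∪
    ((Finset.range n).image fun j => e.image fun u => cyc^[j] u.reverse)

open Function

section IterateRange

variable {α : Type*} [DecidableEq α] {f : α → α} {n : ℕ} {x y : α}

def iterateRange (f : α → α) (n : ℕ) (x : α) : Finset α :=
  (Finset.range n).image fun j => f^[j] x

theorem mem_iterateRange_iff (hx : IsPeriodicPt f n x) (hn : 0 < n) :
    y ∈ iterateRange f n x ↔ ∃ m, f^[m] x = y := by
  simp only [iterateRange, Finset.mem_image, Finset.mem_range]
  refine ⟨fun ⟨m, _, hm⟩ => ⟨m, hm⟩, fun ⟨m, hm⟩ => ⟨m % n, Nat.mod_lt m hn, ?_⟩⟩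
  rw [hx.iterate_mod_apply, hm]

theorem card_iterateRange (hx : IsPeriodicPt f n x) (hn : 0 < n) :
    (iterateRange f n x).card = minimalPeriod f x := by
  have hP := hx.minimalPeriod_pos hn
  have : iterateRange f n x = (Finset.range (minimalPeriod f x)).image fun j => f^[j] x := by
    ext y
    simp only [mem_iterateRange_iff hx hn, Finset.mem_image, Finset.mem_range]
    constructor
    · rintro ⟨m, rfl⟩
      exact ⟨m % minimalPeriod f x, Nat.mod_lt m hP, iterate_mod_minimalPeriod_eq⟩
    · rintro ⟨m, -, rfl⟩
      exact ⟨m, rfl⟩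
  rw [this, Finset.card_image_of_injOn, Finset.card_range]
  simpa using iterate_injOn_Iio_minimalPeriod (f := f) (x := x)

theorem iterateRange_subset (hx : IsPeriodicPt f n x) (hn : 0 < n)
    (hy : y ∈ iterateRange f n x) : iterateRange f n y ⊆ iterateRange f n x := by
  obtain ⟨m, rfl⟩ := (mem_iterateRange_iff hx hn).1 hy
  intro z hz
  obtain ⟨k, -, rfl⟩ := Finset.mem_image.1 hz
  exact (mem_iterateRange_iff hx hn).2 ⟨k + m, iterate_add_apply f k m x⟩

theorem disjoint_iterateRange (hx : IsPeriodicPt f n x) (hy : IsPeriodicPt f n y) (hn : 0 < n)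
    (h : y ∉ iterateRange f n x) : Disjoint (iterateRange f n x) (iterateRange f n y) := by
  refine Finset.disjoint_left.2 fun z hzx hzy => h ?_
  obtain ⟨j, -, rfl⟩ := Finset.mem_image.1 hzx
  obtain ⟨i, hi, hij⟩ := Finset.mem_image.1 hzy
  refine (mem_iterateRange_iff hx hn).2 ⟨n - i + j, ?_⟩
  rw [Finset.mem_range] at hi
  rw [iterate_add_apply, ← hij, ← iterate_add_apply, Nat.sub_add_cancel hi.le, hy.eq]

end IterateRange

theorem ZMod.natCast_mod_of_dvd {p n : ℕ} (hpn : p ∣ n) (a : ℕ) :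
    ((a % n : ℕ) : ZMod p) = a := by
  rw [← map_natCast (ZMod.castHom hpn (ZMod p)), ZMod.natCast_mod, map_natCast]

theorem ZMod.natCast_sub_one_sub_of_dvd {p n i : ℕ} (hpn : p ∣ n) (hi : i < n) :
    ((n - 1 - i : ℕ) : ZMod p) = -1 - i := by
  rw [Nat.cast_sub (by omega), Nat.cast_sub (by omega), (ZMod.natCast_eq_zero_iff n p).2 hpn]
  push_cast
  ring

section Tile

variable {α : Type*} {p n : ℕ}

def tile (n : ℕ) (g : ZMod p → α) : List α :=
  List.ofFn fun i : Fin n => g i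

@[simp]
theorem length_tile (g : ZMod p → α) : (tile n g).length = n :=
  List.length_ofFn

@[simp]
theorem getElem_tile (g : ZMod p → α) {i : ℕ} (hi : i < (tile n g).length) :
    (tile n g)[i] = g i := by
  simp [tile]

theorem tile_injective (hpn : p ∣ n) (hn : 0 < n) :
    Injective (tile n : (ZMod p → α) → List α) := by
  have : NeZero p := ⟨by rintro rfl; rw [zero_dvd_iff] at hpn; omega⟩
  intro g g' h
  funext x
  have hx : x.val < (tile n g).length := by
    simpa using (ZMod.val_lt x).trans_le (Nat.le_of_dvd hn hpn)
  simpa using List.getElem_of_eq h hx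

theorem cyc_tile (hpn : p ∣ n) (g : ZMod p → α) :
    cyc (tile n g) = tile n fun x => g (x - 1) := by
  refine List.ext_getElem (by simp [cyc]) fun i hi _ => ?_
  have hin : i < n := by simpa [cyc] using hi
  simp only [cyc, List.getElem_rotate, getElem_tile, length_tile, ZMod.natCast_mod_of_dvd hpn]
  rw [Nat.cast_add, Nat.cast_sub (by omega), (ZMod.natCast_eq_zero_iff n p).2 hpn]
  simp [sub_eq_add_neg]

theorem iterate_cyc_tile (hpn : p ∣ n) (g : ZMod p → α) (k : ℕ) :
    cyc^[k] (tile n g) = tile n fun x => g (x - (k : ZMod p)) := by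
  induction k with
  | zero => simp
  | succ k ih =>
    rw [iterate_succ_apply', ih, cyc_tile hpn]
    simp [sub_sub, add_comm]

theorem reverse_tile (hpn : p ∣ n) (g : ZMod p → α) :
    (tile n g).reverse = tile n fun x => g (-1 - x) := by
  refine List.ext_getElem (by simp) fun i hi _ => ?_
  have hin : i < n := by simpa using hi
  simp [ZMod.natCast_sub_one_sub_of_dvd hpn hin]

theorem isPeriodicPt_cyc_tile_iff (hpn : p ∣ n) (hn : 0 < n) {g : ZMod p → α} {k : ℕ} :
    IsPeriodicPt cyc k (tile n g) ↔ Periodic g (k : ZMod p) := by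
  rw [IsPeriodicPt, IsFixedPt, iterate_cyc_tile hpn, (tile_injective hpn hn).eq_iff, funext_iff]
  exact ⟨fun h x => by simpa using (h (x + k)).symm, fun h => h.sub_eq⟩

theorem isPeriodicPt_cyc_tile (hpn : p ∣ n) (hn : 0 < n) (g : ZMod p → α) :
    IsPeriodicPt cyc n (tile n g) :=
  (isPeriodicPt_cyc_tile_iff hpn hn).2 (by simp [Periodic, (ZMod.natCast_eq_zero_iff n p).2 hpn])

theorem minimalPeriod_cyc_tile (hpn : p ∣ n) (hn : 0 < n) {g : ZMod p → α}
    (hg : ∀ c, Periodic g c → c = 0) : minimalPeriod cyc (tile n g) = p := by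
  have hp : IsPeriodicPt cyc p (tile n g) :=
    (isPeriodicPt_cyc_tile_iff hpn hn).2 (by simp [Periodic])
  refine Nat.dvd_antisymm hp.minimalPeriod_dvd ?_
  rw [← ZMod.natCast_eq_zero_iff]
  exact hg _ ((isPeriodicPt_cyc_tile_iff hpn hn).1 (isPeriodicPt_minimalPeriod cyc _))

theorem exists_primitive_tile {u : List α} (hlen : u.length = n) (hu : 0 < n) :
    ∃ (p : ℕ) (g : ZMod p → α), p ∣ n ∧ (∀ c, Periodic g c → c = 0) ∧ u = tile n g := by
  have : NeZero n := ⟨hu.ne'⟩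
  obtain ⟨g₀, hg₀⟩ : ∃ g₀ : ZMod n → α, u = tile n g₀ :=
    ⟨fun x => u[x.val]'(hlen ▸ ZMod.val_lt x), List.ext_getElem (by simp [hlen]) fun i hi _ => by
      simp [ZMod.val_natCast, Nat.mod_eq_of_lt (hlen ▸ hi)]⟩
  set P := minimalPeriod cyc u
  have hn : IsPeriodicPt cyc n u := hg₀ ▸ isPeriodicPt_cyc_tile dvd_rfl hu g₀
  have hPn : P ∣ n := hn.minimalPeriod_dvd
  have : NeZero P := ⟨(hn.minimalPeriod_pos hu).ne'⟩
  have hg₀P : Periodic (fun i : ℕ => g₀ i) P := by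
    have hPu : IsPeriodicPt cyc P u := isPeriodicPt_minimalPeriod cyc u
    rw [hg₀, isPeriodicPt_cyc_tile_iff dvd_rfl hu] at hPu
    exact fun i => by simpa using hPu i
  have hu_eq : u = tile n fun y : ZMod P => g₀ y.val := by
    refine List.ext_getElem (by simp [hlen]) fun i hi _ => ?_
    rw [List.getElem_of_eq hg₀ hi]
    simp only [getElem_tile, ZMod.val_natCast]
    exact (hg₀P.map_mod_nat i).symm
  refine ⟨P, _, hPn, fun c hc => ?_, hu_eq⟩
  have hper : IsPeriodicPt cyc c.val u := by
    rw [hu_eq, isPeriodicPt_cyc_tile_iff hPn hu, ZMod.natCast_zmod_val]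
    exact hc
  rw [← ZMod.val_eq_zero]
  exact Nat.eq_zero_of_dvd_of_lt hper.minimalPeriod_dvd (ZMod.val_lt c)

variable [DecidableEq α]

theorem dihedralOrbit_eq_union (u : List α) :
    dihedralOrbit u = iterateRange cyc u.length u ∪ iterateRange cyc u.length u.reverse :=
  rfl

theorem reverse_tile_mem_iterateRange_iff (hpn : p ∣ n) (hn : 0 < n) {g : ZMod p → α} :
    (tile n g).reverse ∈ iterateRange cyc n (tile n g) ↔ ∃ c, ∀ x, g (c - x) = g x := by
  have : NeZero p := ⟨(Nat.pos_of_dvd_of_pos hpn hn).ne'⟩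
  simp only [mem_iterateRange_iff (isPeriodicPt_cyc_tile hpn hn g) hn, iterate_cyc_tile hpn, reverse_tile hpn,
    (tile_injective hpn hn).eq_iff, funext_iff]
  constructor
  · rintro ⟨m, hm⟩
    exact ⟨-1 - m, fun x => by simpa [sub_sub, add_comm] using hm (-1 - x)⟩
  · rintro ⟨c, hc⟩
    refine ⟨(-1 - c).val, fun x => ?_⟩
    rw [ZMod.natCast_zmod_val, ← hc (-1 - x)]
    ring_nf

theorem card_dihedralOrbit_tile (hpn : p ∣ n) (hn : 0 < n) {g : ZMod p → α}
    (hg : ∀ c, Periodic g c → c = 0) :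
    (dihedralOrbit (tile n g)).card = if ∃ c, ∀ x, g (c - x) = g x then p else 2 * p := by
  have hrev : ∀ c, Periodic (fun x => g (-1 - x)) c → c = 0 := fun c hc =>
    hg c (by simpa using hc.const_sub (-1))
  have hper : ∀ g : ZMod p → α, IsPeriodicPt cyc n (tile n g) := isPeriodicPt_cyc_tile hpn hn
  rw [dihedralOrbit_eq_union, length_tile]
  split_ifs with hsym
  · rw [← reverse_tile_mem_iterateRange_iff hpn hn] at hsym
    rw [Finset.union_eq_left.2 (iterateRange_subset (hper g) hn hsym),
      card_iterateRange (hper g) hn, minimalPeriod_cyc_tile hpn hn hg]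
  · rw [← reverse_tile_mem_iterateRange_iff hpn hn] at hsym
    rw [reverse_tile hpn] at hsym ⊢
    rw [Finset.card_union_of_disjoint (disjoint_iterateRange (hper _) (hper _) hn hsym),
      card_iterateRange (hper _) hn, card_iterateRange (hper _) hn,
      minimalPeriod_cyc_tile hpn hn hg, minimalPeriod_cyc_tile hpn hn hrev, two_mul]

end Tile

section Lucas

variable {p n : ℕ}

theorem mem_allBool {u : List Bool} : u ∈ allBool n ↔ u.length = n := by
  refine ⟨fun h => ?_, fun h => ?_⟩
  · obtain ⟨f, -, rfl⟩ := Finset.mem_image.1 h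
    exact List.length_ofFn
  · subst h
    exact Finset.mem_image.2 ⟨fun i => u[i], Finset.mem_univ _, List.ofFn_getElem⟩

theorem isLucasStr_iff_getElem {u : List Bool} (hu : 0 < u.length) :
    IsLucasStr u ↔ ∀ i (hi : i < u.length),
      ¬(u[i] = true ∧ u[(i + 1) % u.length]'(Nat.mod_lt _ hu) = true) := by
  rw [IsLucasStr, IsFibStr, List.Chain', List.isChain_iff_getElem, List.head?_eq_getElem?,
    List.getLast?_eq_getElem?, List.getElem?_eq_getElem hu,
    List.getElem?_eq_getElem (Nat.sub_lt hu one_pos)]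
  simp only [Option.some.injEq]
  constructor
  · rintro ⟨hfib, hends⟩ i hi
    by_cases hi' : i + 1 < u.length
    · simp only [Nat.mod_eq_of_lt hi']
      rcases hfib i hi' with h | h <;> simp [h]
    · obtain rfl : i = u.length - 1 := by omega
      simp only [Nat.sub_add_cancel hu, Nat.mod_self]
      exact fun h => hends ⟨h.2, h.1⟩
  · intro h
    refine ⟨fun i hi => ?_, fun hends => h (u.length - 1) (by omega) ?_⟩
    · have := not_and_or.1 (h i (by omega))
      simpa [Nat.mod_eq_of_lt hi] using this
    · simpa [Nat.sub_add_cancel hu] using ⟨hends.2, hends.1⟩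

theorem tile_mem_lucasStrings_iff (hpn : p ∣ n) (hn : 0 < n) {g : ZMod p → Bool} :
    tile n g ∈ lucasStrings n ↔ ∀ x, ¬(g x = true ∧ g (x + 1) = true) := by
  have : NeZero p := ⟨(Nat.pos_of_dvd_of_pos hpn hn).ne'⟩
  simp only [lucasStrings, Finset.mem_filter, mem_allBool, length_tile, true_and,
    isLucasStr_iff_getElem (show 0 < (tile n g).length by simpa), getElem_tile,
    ZMod.natCast_mod_of_dvd hpn, Nat.cast_add, Nat.cast_one]
  refine ⟨fun h x => ?_, fun h i _ => h i⟩
  simpa using h x.val ((ZMod.val_lt x).trans_le (Nat.le_of_dvd hn hpn))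

end Lucas

section Patterns

variable {p n : ℕ}

set_option maxRecDepth 2000 in
theorem exists_symmetry_of_lt_nine (hp₀ : 0 < p) (hp : p < 9) (g : ZMod p → Bool)
    (hfib : ∀ x, ¬(g x = true ∧ g (x + 1) = true)) (hg : ∀ c, Periodic g c → c = 0) :
    ∃ c, ∀ x, g (c - x) = g x := by
  revert g
  unfold Periodic
  interval_cases p <;> decide

theorem exists_mem_lucasStrings_of_tile (hpn : p ∣ n) (hn : 0 < n) (g : ZMod p → Bool)
    (hfib : ∀ x, ¬(g x = true ∧ g (x + 1) = true)) (hg : ∀ c, Periodic g c → c = 0) :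
    ∃ u ∈ lucasStrings n,
      (dihedralOrbit u).card = if ∃ c, ∀ x, g (c - x) = g x then p else 2 * p :=
  ⟨tile n g, (tile_mem_lucasStrings_iff hpn hn).2 hfib, card_dihedralOrbit_tile hpn hn hg⟩

theorem exists_mem_lucasStrings_card_dihedralOrbit_eq (hn : 0 < n) (hp : 1 ≤ p) (hpn : p ∣ n) :
    ∃ u ∈ lucasStrings n, (dihedralOrbit u).card = p := by
  rcases hp.eq_or_lt with rfl | hp
  · simpa using exists_mem_lucasStrings_of_tile hpn hn (fun _ => false) (by simp)
      fun c _ => Subsingleton.elim c 0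
  · have : Fact (1 < p) := ⟨hp⟩
    obtain ⟨u, hu, hcard⟩ := exists_mem_lucasStrings_of_tile hpn hn (fun x => decide (x = 0))
      (by simp) fun c hc => by simpa using hc 0
    exact ⟨u, hu, hcard.trans (if_pos ⟨0, by simp⟩)⟩

def chiralSupport : Finset ℤ := {0, 2, 5}

/-- The ones of this pattern are separated by gaps `2, 3, p - 5`, pairwise distinct once `p ≥ 9`,
so no rotation and no reflection of `ZMod p` preserves it. -/
def chiralPattern (p : ℕ) (x : ZMod p) : Bool :=
  decide (∃ s ∈ chiralSupport, x = s)

theorem chiralSupport_bounds : ∀ s ∈ chiralSupport, 0 ≤ s ∧ s ≤ 5 := by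
  decide

theorem chiralPattern_intCast (hp : 9 ≤ p) {t : ℤ} (ht₀ : -3 ≤ t) (ht₁ : t ≤ 8) :
    chiralPattern p t = decide (t ∈ chiralSupport) := by
  have hinj : ∀ s ∈ chiralSupport, ((t : ZMod p) = s ↔ t = s) := by
    intro s hs
    have := chiralSupport_bounds s hs
    rw [ZMod.intCast_eq_intCast_iff_dvd_sub]
    refine ⟨fun h => ?_, fun h => by rw [h, sub_self]; exact dvd_zero _⟩
    have := Int.eq_zero_of_abs_lt_dvd h (abs_lt.2 ⟨by omega, by omega⟩)
    omega
  simp only [chiralPattern, decide_eq_decide]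
  exact ⟨fun ⟨s, hs, h⟩ => (hinj s hs).1 h ▸ hs, fun h => ⟨t, h, rfl⟩⟩

theorem chiralPattern_zero : chiralPattern p 0 = true :=
  decide_eq_true ⟨0, by decide, by simp⟩

theorem chiralPattern_not_adjacent (hp : 9 ≤ p) (x : ZMod p) :
    ¬(chiralPattern p x = true ∧ chiralPattern p (x + 1) = true) := by
  rintro ⟨hx, hx1⟩
  obtain ⟨s, hs, rfl⟩ := of_decide_eq_true hx
  have := chiralSupport_bounds s hs
  rw [← Int.cast_one, ← Int.cast_add, chiralPattern_intCast hp (by omega) (by omega)] at hx1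
  exact (by decide : ∀ s ∈ chiralSupport, s + 1 ∉ chiralSupport) s hs (of_decide_eq_true hx1)

theorem eq_zero_of_periodic_chiralPattern (hp : 9 ≤ p) {c : ZMod p}
    (hc : Periodic (chiralPattern p) c) : c = 0 := by
  obtain ⟨s, hs, rfl⟩ : ∃ s ∈ chiralSupport, c = s :=
    of_decide_eq_true (show chiralPattern p c = true by simpa [chiralPattern_zero] using hc 0)
  have := chiralSupport_bounds s hs
  have h2 := hc ((2 : ℤ) : ZMod p)
  rw [← Int.cast_add, chiralPattern_intCast hp (by omega) (by omega),
    chiralPattern_intCast hp (by omega) (by omega)] at h2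
  obtain rfl := (by decide : ∀ s ∈ chiralSupport,
    decide (2 + s ∈ chiralSupport) = decide (2 ∈ chiralSupport) → s = 0) s hs h2
  exact Int.cast_zero

theorem not_exists_chiralPattern_symmetry (hp : 9 ≤ p) :
    ¬∃ c, ∀ x, chiralPattern p (c - x) = chiralPattern p x := by
  rintro ⟨c, hc⟩
  obtain ⟨s, hs, rfl⟩ : ∃ s ∈ chiralSupport, c = s :=
    of_decide_eq_true (show chiralPattern p c = true by simpa [chiralPattern_zero] using hc 0)
  have := chiralSupport_bounds s hs
  have h2 := hc ((2 : ℤ) : ZMod p)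
  rw [← Int.cast_sub, chiralPattern_intCast hp (by omega) (by omega),
    chiralPattern_intCast hp (by omega) (by omega)] at h2
  obtain rfl := (by decide : ∀ s ∈ chiralSupport,
    decide (s - 2 ∈ chiralSupport) = decide (2 ∈ chiralSupport) → s = 2) s hs h2
  have h5 := hc ((5 : ℤ) : ZMod p)
  rw [← Int.cast_sub, chiralPattern_intCast hp (by omega) (by omega),
    chiralPattern_intCast hp (by omega) (by omega)] at h5
  exact absurd h5 (by decide)

theorem exists_mem_lucasStrings_card_dihedralOrbit_eq_two_mul (hn : 0 < n) (hp : 9 ≤ p)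
    (hpn : p ∣ n) : ∃ u ∈ lucasStrings n, (dihedralOrbit u).card = 2 * p := by
  obtain ⟨u, hu, hcard⟩ := exists_mem_lucasStrings_of_tile hpn hn _
    (chiralPattern_not_adjacent hp) fun _ => eq_zero_of_periodic_chiralPattern hp
  exact ⟨u, hu, hcard.trans (if_neg (not_exists_chiralPattern_symmetry hp))⟩

end Patterns

/-- For `n ≥ 1`, the set of sizes of the dihedral orbits of Lucas strings of length `n`
equals `{k ≥ 1 : k ∣ n} ∪ {k ≥ 18 : k ∣ 2n}`. -/
theorem lucas_vertex_orbit_sizes (n : ℕ) (hn : 1 ≤ n) :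
    {k : ℕ | ∃ u ∈ lucasStrings n, (dihedralOrbit u).card = k}
      = {k : ℕ | 1 ≤ k ∧ k ∣ n} ∪ {k : ℕ | 18 ≤ k ∧ k ∣ 2 * n} := by
  ext k
  constructor
  · rintro ⟨u, hu, rfl⟩
    obtain ⟨p, g, hpn, hg, rfl⟩ :=
      exists_primitive_tile (mem_allBool.1 (Finset.mem_filter.1 hu).1) hn
    have hfib := (tile_mem_lucasStrings_iff hpn hn).1 hu
    have hp : 0 < p := Nat.pos_of_dvd_of_pos hpn hn
    rw [card_dihedralOrbit_tile hpn hn hg]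
    split_ifs with hsym
    · exact Or.inl ⟨hp, hpn⟩
    · have : 9 ≤ p := by
        by_contra! hp9
        exact hsym (exists_symmetry_of_lt_nine hp hp9 g hfib hg)
      exact Or.inr ⟨by omega, mul_dvd_mul_left 2 hpn⟩
  · rintro (⟨hk, hkn⟩ | ⟨hk, hk2n⟩)
    · exact exists_mem_lucasStrings_card_dihedralOrbit_eq hn hk hkn
    · by_cases hkn : k ∣ n
      · exact exists_mem_lucasStrings_card_dihedralOrbit_eq hn (by omega) hkn
      obtain ⟨p, rfl⟩ : 2 ∣ k := by
        by_contra hodd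
        exact hkn ((Nat.coprime_comm.1 (Nat.prime_two.coprime_iff_not_dvd.2 hodd)).dvd_of_dvd_mul_left hk2n)
      exact exists_mem_lucasStrings_card_dihedralOrbit_eq_two_mul hn (by omega)
        (Nat.dvd_of_mul_dvd_mul_left two_pos hk2n)
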